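/- arXiv:cs/0011015 — 4 statements merged into one kernel-verified Lean document; each statement's English description precedes it below -/
import Mathlib

section
/- Let C be a cover and M be a matching of a weighted bipartite graph G such that every node u with C(u) > 0 is matched by some edge of M, and C(u) + C(v) = w(u,v) for every edge uv ∈ M. Then C is a minimum weight cover and M is a maximum weight matching of G. -/
/-!
Weak duality: each edge of a matching weighs at most the sum of the cover values at its two ends,
and distinct edges have distinct ends, so every matching weighs at most every cover. Under the
slackness conditions both estimates are equalities for `M` and `C`, so `mWt w M = coverWt X Y C`,
and this common value is squeezed between all matching weights and all cover weights.
-/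

open Finset

variable {V : Type*} [Fintype V] [DecidableEq V]

/-- `C` is a (weighted vertex) cover of the bipartite graph on parts `X`, `Y`
with edge weights `w` (where `w x y = 0` means no edge). -/
def IsCover (X Y : Finset V) (w : V → V → ℕ) (C : V → ℕ) : Prop :=
  ∀ x ∈ X, ∀ y ∈ Y, w x y ≤ C x + C y

/-- The weight of a cover: the sum of its values over all nodes. -/
def coverWt (X Y : Finset V) (C : V → ℕ) : ℕ := ∑ u ∈ X ∪ Y, C u

/-- `M` is a matching of the weighted bipartite graph: a set of pairwise
node-disjoint edges, each going from `X` to `Y` with positive weight. -/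
def IsBMatching (X Y : Finset V) (w : V → V → ℕ) (M : Finset (V × V)) : Prop :=
  (∀ e ∈ M, e.1 ∈ X ∧ e.2 ∈ Y ∧ 0 < w e.1 e.2) ∧
  (∀ e ∈ M, ∀ f ∈ M, e ≠ f → e.1 ≠ f.1 ∧ e.2 ≠ f.2)

/-- The total weight of a matching. -/
def mWt (w : V → V → ℕ) (M : Finset (V × V)) : ℕ := ∑ e ∈ M, w e.1 e.2

namespace IsBMatching

variable {α : Type*} {X Y : Finset α} {w : α → α → ℕ} {M : Finset (α × α)}

theorem injOn_fst (hM : IsBMatching X Y w M) : Set.InjOn Prod.fst (M : Set (α × α)) :=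
  fun e he f hf h => by_contra fun hne => (hM.2 e he f hf hne).1 h

theorem injOn_snd (hM : IsBMatching X Y w M) : Set.InjOn Prod.snd (M : Set (α × α)) :=
  fun e he f hf h => by_contra fun hne => (hM.2 e he f hf hne).2 h

variable [DecidableEq α]

theorem image_fst_subset (hM : IsBMatching X Y w M) : M.image Prod.fst ⊆ X :=
  image_subset_iff.2 fun e he => (hM.1 e he).1

theorem image_snd_subset (hM : IsBMatching X Y w M) : M.image Prod.snd ⊆ Y :=
  image_subset_iff.2 fun e he => (hM.1 e he).2.1

theorem ends_subset (hM : IsBMatching X Y w M) :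
    M.image Prod.fst ∪ M.image Prod.snd ⊆ X ∪ Y :=
  union_subset_union hM.image_fst_subset hM.image_snd_subset

theorem sum_ends_eq (hXY : Disjoint X Y) (hM : IsBMatching X Y w M) (C : α → ℕ) :
    ∑ e ∈ M, (C e.1 + C e.2) = ∑ u ∈ M.image Prod.fst ∪ M.image Prod.snd, C u := by
  rw [sum_union (hXY.mono hM.image_fst_subset hM.image_snd_subset),
    sum_image hM.injOn_fst, sum_image hM.injOn_snd, sum_add_distrib]

theorem mWt_le_coverWt (hXY : Disjoint X Y) (hM : IsBMatching X Y w M) {C : α → ℕ}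
    (hC : IsCover X Y w C) : mWt w M ≤ coverWt X Y C :=
  calc mWt w M ≤ ∑ e ∈ M, (C e.1 + C e.2) :=
        sum_le_sum fun e he => hC e.1 (hM.1 e he).1 e.2 (hM.1 e he).2.1
    _ = ∑ u ∈ M.image Prod.fst ∪ M.image Prod.snd, C u := hM.sum_ends_eq hXY C
    _ ≤ coverWt X Y C := sum_le_sum_of_subset hM.ends_subset

theorem mWt_eq_coverWt (hXY : Disjoint X Y) (hM : IsBMatching X Y w M) {C : α → ℕ}
    (hmatched : ∀ u ∈ X ∪ Y, 0 < C u → ∃ e ∈ M, e.1 = u ∨ e.2 = u)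
    (htight : ∀ e ∈ M, C e.1 + C e.2 = w e.1 e.2) : mWt w M = coverWt X Y C := by
  have hzero : ∀ u ∈ X ∪ Y, u ∉ M.image Prod.fst ∪ M.image Prod.snd → C u = 0 := by
    intro u hu hunmatched
    by_contra hCu
    obtain ⟨e, he, hends⟩ := hmatched u hu (Nat.pos_of_ne_zero hCu)
    refine hunmatched (mem_union.2 ?_)
    rcases hends with rfl | rfl
    · exact .inl (mem_image_of_mem _ he)
    · exact .inr (mem_image_of_mem _ he)
  calc mWt w M = ∑ e ∈ M, (C e.1 + C e.2) := (sum_congr rfl htight).symm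
    _ = ∑ u ∈ M.image Prod.fst ∪ M.image Prod.snd, C u := hM.sum_ends_eq hXY C
    _ = coverWt X Y C := sum_subset hM.ends_subset hzero

end IsBMatching

/-- Fact 1 (3 ⇒ 1): complementary slackness conditions imply optimality of
both the cover and the matching. -/
theorem slackness_implies_optimal
    (X Y : Finset V) (hXY : Disjoint X Y) (w : V → V → ℕ)
    (C : V → ℕ) (M : Finset (V × V))
    (hC : IsCover X Y w C) (hM : IsBMatching X Y w M)
    (hmatched : ∀ u ∈ X ∪ Y, 0 < C u → ∃ e ∈ M, e.1 = u ∨ e.2 = u)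
    (htight : ∀ e ∈ M, C e.1 + C e.2 = w e.1 e.2) :
    (∀ C' : V → ℕ, IsCover X Y w C' → coverWt X Y C ≤ coverWt X Y C') ∧
    (∀ M' : Finset (V × V), IsBMatching X Y w M' → mWt w M' ≤ mWt w M) := by
  have hdual : mWt w M = coverWt X Y C := hM.mWt_eq_coverWt hXY hmatched htight
  refine ⟨fun C' hC' => ?_, fun M' hM' => ?_⟩
  · exact hdual ▸ hM.mWt_le_coverWt hXY hC'
  · exact hdual ▸ hM'.mWt_le_coverWt hXY hC
end

section
/- (Unfolded graph duality) Let φ(G) be the unfolded graph of G: for each node u of G, φ(G) has copies u^1, …, u^α where α is the maximum weight of an edge incident to u, and for each edge uv of G with w(u,v) = β, φ(G) has the unweighted edges u^1 v^β, u^2 v^{β−1}, …, u^β v^1. Then the maximum weight of a matching of G equals the maximum cardinality of a matching of φ(G): mwm(G) = mm(φ(G)). -/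
open Finset

variable {V : Type*} [Fintype V] [DecidableEq V]

open Classical in
/-- The maximum weight of a matching of the bipartite graph `(X, Y, w)`. -/
noncomputable def mwm (X Y : Finset V) (w : V → V → ℕ) : ℕ :=
  Finset.sup ((Finset.univ : Finset (V × V)).powerset.filter fun M => IsBMatching X Y w M)
    fun M => mWt w M

/-- The minimum weight of a cover of the bipartite graph `(X, Y, w)`. -/
noncomputable def mwc (X Y : Finset V) (w : V → V → ℕ) : ℕ :=
  sInf {n : ℕ | ∃ C : V → ℕ, IsCover X Y w C ∧ coverWt X Y C = n}

/-- Adjacency in the unfolded graph `φ(G)`: the copies `u^i` of a node `u` are the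
pairs `(u, i)` with `i ≥ 1`, and for each edge `uv` of weight `β = w u v` the
unfolded graph has the (unweighted) edges `u^i v^{β+1-i}` for `1 ≤ i ≤ β`. -/
def phiAdj (X Y : Finset V) (w : V → V → ℕ) (a b : V × ℕ) : Prop :=
  (a.1 ∈ X ∧ b.1 ∈ Y ∧ 1 ≤ a.2 ∧ 1 ≤ b.2 ∧ 0 < w a.1 b.1 ∧ a.2 + b.2 = w a.1 b.1 + 1) ∨
  (b.1 ∈ X ∧ a.1 ∈ Y ∧ 1 ≤ b.2 ∧ 1 ≤ a.2 ∧ 0 < w b.1 a.1 ∧ b.2 + a.2 = w b.1 a.1 + 1)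

/-- `M` is a matching (set of pairwise node-disjoint edges) of the unweighted
graph with adjacency relation `adj`. -/
def IsUMatching {α : Type*} (adj : α → α → Prop) (M : Finset (α × α)) : Prop :=
  (∀ e ∈ M, adj e.1 e.2) ∧ (∀ e ∈ M, e.1 ≠ e.2) ∧
  (∀ e ∈ M, ∀ f ∈ M, e ≠ f →
    e.1 ≠ f.1 ∧ e.1 ≠ f.2 ∧ e.2 ≠ f.1 ∧ e.2 ≠ f.2)

/-- The unfolding `φ(M)` of a matching `M` of `G`: each edge `uv ∈ M` of weight
`β` contributes the edges `u^1 v^β, …, u^β v^1`. -/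
def phiM (w : V → V → ℕ) (M : Finset (V × V)) : Finset ((V × ℕ) × (V × ℕ)) :=
  M.biUnion fun e =>
    (Finset.Icc 1 (w e.1 e.2)).image fun i => ((e.1, i), (e.2, w e.1 e.2 + 1 - i))

/-- The number of copies of a node `u` in the unfolded graph: the maximum weight
of an edge incident to `u`. -/
def alphaCopies (X Y : Finset V) (w : V → V → ℕ) (u : V) : ℕ :=
  (X ∪ Y).sup fun v => max (w u v) (w v u)

/-! The unfolding `φ(M)` of a matching `M` of `G` is a matching of `φ(G)` with `mWt w M` edges,
so `mwm(G) ≤ mm(φ(G))`. Conversely, a cover `C` of `G` selects the copies `u^1, …, u^{C u}` of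
each node, and every edge `u^i v^j` of `φ(G)` has an endpoint among them, because
`i + j = w u v + 1 ≤ C u + C v + 1`; so a matching of `φ(G)` injects into this set of
`coverWt C` copies. Taking for `C` a cover whose weight equals that of some matching
(König–Egerváry) closes the chain `mm(φ(G)) ≤ coverWt C ≤ mwm(G)`. -/

section

variable {V : Type*} [DecidableEq V]

lemma mem_phiM {w : V → V → ℕ} {M : Finset (V × V)} {a : (V × ℕ) × (V × ℕ)} :
    a ∈ phiM w M ↔
      ∃ e ∈ M, ∃ i ∈ Icc 1 (w e.1 e.2), ((e.1, i), (e.2, w e.1 e.2 + 1 - i)) = a := by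
  simp only [phiM, mem_biUnion, mem_image]

lemma IsBMatching.isUMatching_phiM {X Y : Finset V} (hXY : Disjoint X Y) {w : V → V → ℕ}
    {M : Finset (V × V)} (hM : IsBMatching X Y w M) :
    IsUMatching (phiAdj X Y w) (phiM w M) := by
  have hsides : ∀ e ∈ M, ∀ f ∈ M, e.1 ≠ f.2 := fun e he f hf h =>
    disjoint_left.mp hXY (hM.1 e he).1 (h ▸ (hM.1 f hf).2.1)
  refine ⟨?adj, ?irrefl, ?disjoint⟩
  case adj =>
    rintro _ ha
    obtain ⟨e, he, i, hi, rfl⟩ := mem_phiM.mp ha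
    obtain ⟨hx, hy, hw⟩ := hM.1 e he
    rw [mem_Icc] at hi
    refine Or.inl ⟨hx, hy, hi.1, ?_, hw, ?_⟩ <;> dsimp only <;> omega
  case irrefl =>
    rintro _ ha
    obtain ⟨e, he, i, -, rfl⟩ := mem_phiM.mp ha
    exact fun h => hsides e he e he (congrArg Prod.fst h)
  case disjoint =>
    rintro _ ha _ hb hab
    obtain ⟨e, he, i, hi, rfl⟩ := mem_phiM.mp ha
    obtain ⟨f, hf, j, hj, rfl⟩ := mem_phiM.mp hb
    have hef := hsides e he f hf
    have hfe := (hsides f hf e he).symm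
    rw [mem_Icc] at hi hj
    by_cases h : e = f
    · subst h
      have hij : i ≠ j := by rintro rfl; exact hab rfl
      simp only [ne_eq, Prod.mk.injEq, hef, hfe, false_and, not_false_eq_true, true_and]
      omega
    · obtain ⟨h1, h2⟩ := hM.2 e he f hf h
      simp [h1, h2, hef, hfe]

lemma IsBMatching.card_phiM {X Y : Finset V} {w : V → V → ℕ} {M : Finset (V × V)}
    (hM : IsBMatching X Y w M) : (phiM w M).card = mWt w M := by
  rw [phiM, card_biUnion]
  · refine sum_congr rfl fun e _ => ?_
    rw [card_image_of_injOn fun i _ j _ h => congrArg (·.1.2) h, Nat.card_Icc,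
      Nat.add_sub_cancel]
  · intro e he f hf hef
    simp only [disjoint_left, mem_image]
    rintro _ ⟨i, -, rfl⟩ ⟨j, -, h⟩
    exact (hM.2 e he f hf hef).1 (congrArg (·.1.1) h).symm

def coverCopies (X Y : Finset V) (C : V → ℕ) : Finset (V × ℕ) :=
  (X ∪ Y).biUnion fun u => (Icc 1 (C u)).image (u, ·)

lemma card_coverCopies (X Y : Finset V) (C : V → ℕ) :
    (coverCopies X Y C).card = coverWt X Y C := by
  rw [coverCopies, card_biUnion, coverWt]
  · refine sum_congr rfl fun u _ => ?_
    rw [card_image_of_injective _ (Prod.mk_right_injective u), Nat.card_Icc, Nat.add_sub_cancel]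
  · intro u _ v _ huv
    simp only [disjoint_left, mem_image]
    rintro _ ⟨i, -, rfl⟩ ⟨j, -, h⟩
    exact huv (congrArg Prod.fst h).symm

lemma IsCover.exists_mem_coverCopies {X Y : Finset V} {w : V → V → ℕ} {C : V → ℕ}
    (hC : IsCover X Y w C) {a b : V × ℕ} (hab : phiAdj X Y w a b) :
    a ∈ coverCopies X Y C ∨ b ∈ coverCopies X Y C := by
  simp only [coverCopies, mem_biUnion, mem_image, mem_Icc]
  rcases hab with ⟨hx, hy, ha, hb, -, hsum⟩ | ⟨hx, hy, hb, ha, -, hsum⟩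
  · have hcover := hC _ hx _ hy
    by_cases h : a.2 ≤ C a.1
    · exact Or.inl ⟨a.1, mem_union_left _ hx, a.2, ⟨ha, h⟩, rfl⟩
    · exact Or.inr ⟨b.1, mem_union_right _ hy, b.2, ⟨hb, by omega⟩, rfl⟩
  · have hcover := hC _ hx _ hy
    by_cases h : a.2 ≤ C a.1
    · exact Or.inl ⟨a.1, mem_union_right _ hy, a.2, ⟨ha, h⟩, rfl⟩
    · exact Or.inr ⟨b.1, mem_union_left _ hx, b.2, ⟨hb, by omega⟩, rfl⟩

lemma IsUMatching.card_le_coverWt {X Y : Finset V} {w : V → V → ℕ} {C : V → ℕ}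
    (hC : IsCover X Y w C) {N : Finset ((V × ℕ) × (V × ℕ))}
    (hN : IsUMatching (phiAdj X Y w) N) : N.card ≤ coverWt X Y C := by
  let coveredEnd : (V × ℕ) × (V × ℕ) → V × ℕ := fun e =>
    if e.1 ∈ coverCopies X Y C then e.1 else e.2
  have hmaps : ∀ e ∈ N, coveredEnd e ∈ coverCopies X Y C := fun e he => by
    unfold coveredEnd
    split_ifs with h
    · exact h
    · exact (hC.exists_mem_coverCopies (hN.1 e he)).resolve_left h
  have hinj : Set.InjOn coveredEnd N := fun e he f hf hef => by
    by_contra hne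
    obtain ⟨h11, h12, h21, h22⟩ := hN.2.2 e he f hf hne
    unfold coveredEnd at hef
    split_ifs at hef <;> contradiction
  rw [← card_coverCopies]
  exact card_le_card_of_injOn coveredEnd hmaps hinj

end

theorem mwm_eq_mm_unfolded_general
    (X Y : Finset V) (hXY : Disjoint X Y) (w : V → V → ℕ)
    (hKE : ∀ w' : V → V → ℕ, ∃ (C : V → ℕ) (M : Finset (V × V)),
      IsCover X Y w' C ∧ IsBMatching X Y w' M ∧ mWt w' M = coverWt X Y C) :
    mwm X Y w =
      sSup {n : ℕ | ∃ M : Finset ((V × ℕ) × (V × ℕ)),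
        IsUMatching (phiAdj X Y w) M ∧ M.card = n} := by
  classical
  obtain ⟨C, M₀, hC, hM₀, hdual⟩ := hKE w
  have hbound : ∀ n ∈ {n : ℕ | ∃ M : Finset ((V × ℕ) × (V × ℕ)),
      IsUMatching (phiAdj X Y w) M ∧ M.card = n}, n ≤ coverWt X Y C := by
    rintro _ ⟨N, hN, rfl⟩
    exact hN.card_le_coverWt hC
  apply le_antisymm
  · refine Finset.sup_le fun M hM => le_csSup ⟨_, hbound⟩ ?_
    have hM := (mem_filter.mp hM).2
    exact ⟨phiM w M, hM.isUMatching_phiM hXY, hM.card_phiM⟩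
  · refine csSup_le ⟨0, ∅, by simp [IsUMatching], rfl⟩ fun n hn => ?_
    calc n ≤ coverWt X Y C := hbound n hn
      _ = mWt w M₀ := hdual.symm
      _ ≤ mwm X Y w :=
        le_sup (f := mWt w) (mem_filter.mpr ⟨mem_powerset.mpr (subset_univ M₀), hM₀⟩)

/-- Unfolded graph duality: the maximum weight of a matching of `G` equals the
maximum cardinality of a matching of the unfolded graph `φ(G)`. -/
theorem mwm_eq_mm_unfolded
    (X Y : Finset V) (hXY : Disjoint X Y) (w : V → V → ℕ)
    (hisoX : ∀ u ∈ X, ∃ y ∈ Y, 0 < w u y)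
    (hisoY : ∀ v ∈ Y, ∃ x ∈ X, 0 < w x v)
    (hKE : ∀ w' : V → V → ℕ, ∃ (C : V → ℕ) (M : Finset (V × V)),
      IsCover X Y w' C ∧ IsBMatching X Y w' M ∧ mWt w' M = coverWt X Y C) :
    mwm X Y w =
      sSup {n : ℕ | ∃ M : Finset ((V × ℕ) × (V × ℕ)),
        IsUMatching (phiAdj X Y w) M ∧ M.card = n} :=
  mwm_eq_mm_unfolded_general X Y hXY w hKE
end

section
/- Given a minimum weight cover C of G, define C' on the nodes of the unfolded graph φ(G) by C'(u^i) = 1 if i ≤ C(u) and C'(u^i) = 0 otherwise. Then C' is a (0,1)-valued vertex cover of the unweighted graph φ(G), i.e., every edge u^i v^j of φ(G) has C'(u^i) = 1 or C'(v^j) = 1; moreover Σ C'(u^i) = Σ_u C(u). -/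
open Finset

variable {V : Type*} [Fintype V] [DecidableEq V]

/-!
Capping a cover at `alphaCopies` keeps it a cover, since no edge at `u` weighs more than
`alphaCopies u`; so a minimum cover never exceeds `alphaCopies` and `C'` picks up exactly
`C u` ones among the copies of `u`. An edge `u^i v^j` of `φ(G)` has `i + j = w u v + 1`,
hence `i + j ≤ C u + C v + 1`, which forces `i ≤ C u` or `j ≤ C v`.
-/

section alphaCopies

variable {α : Type*} [DecidableEq α] {X Y : Finset α} {w : α → α → ℕ}

lemma le_alphaCopies_left {u v : α} (hv : v ∈ X ∪ Y) : w u v ≤ alphaCopies X Y w u :=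
  (le_max_left _ _).trans (le_sup (f := fun v => max (w u v) (w v u)) hv)

lemma le_alphaCopies_right {u v : α} (hv : v ∈ X ∪ Y) : w v u ≤ alphaCopies X Y w u :=
  (le_max_right _ _).trans (le_sup (f := fun v => max (w u v) (w v u)) hv)

lemma IsCover.min_alphaCopies {C : α → ℕ} (hC : IsCover X Y w C) :
    IsCover X Y w fun u => min (C u) (alphaCopies X Y w u) := by
  intro x hx y hy
  have hx' : w x y ≤ alphaCopies X Y w x := le_alphaCopies_left (mem_union_right X hy)
  have hy' : w x y ≤ alphaCopies X Y w y := le_alphaCopies_right (mem_union_left Y hx)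
  have := hC x hx y hy
  simp only
  omega

lemma le_alphaCopies_of_minimal {C : α → ℕ} (hC : IsCover X Y w C)
    (hCmin : ∀ C' : α → ℕ, IsCover X Y w C' → coverWt X Y C ≤ coverWt X Y C')
    {u : α} (hu : u ∈ X ∪ Y) : C u ≤ alphaCopies X Y w u := by
  have hle : ∀ v ∈ X ∪ Y, min (C v) (alphaCopies X Y w v) ≤ C v := fun _ _ => min_le_left _ _
  have heq := (sum_eq_sum_iff_of_le hle).mp
    (le_antisymm (sum_le_sum hle) (hCmin _ hC.min_alphaCopies)) u hu
  exact min_eq_left_iff.mp heq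

end alphaCopies

/-- The paper's `C'`; the pairs `(u, 0)` are not nodes of `φ(G)` and get `0`. -/
def unfoldCover {α : Type*} (C : α → ℕ) (a : α × ℕ) : ℕ :=
  if 1 ≤ a.2 ∧ a.2 ≤ C a.1 then 1 else 0

section unfoldCover

variable {α : Type*} {C : α → ℕ}

lemma unfoldCover_eq_one {a : α × ℕ} (h1 : 1 ≤ a.2) (hC : a.2 ≤ C a.1) :
    unfoldCover C a = 1 :=
  if_pos ⟨h1, hC⟩

lemma unfoldCover_eq_one_or_of_phiAdj {X Y : Finset α} {w : α → α → ℕ}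
    (hC : IsCover X Y w C) {a b : α × ℕ} (hab : phiAdj X Y w a b) :
    unfoldCover C a = 1 ∨ unfoldCover C b = 1 := by
  have key : ∀ {β : ℕ}, β ≤ C a.1 + C b.1 → 1 ≤ a.2 → 1 ≤ b.2 → a.2 + b.2 = β + 1 →
      unfoldCover C a = 1 ∨ unfoldCover C b = 1 := fun hβ ha hb hsum => by
    by_cases hCa : a.2 ≤ C a.1
    · exact .inl (unfoldCover_eq_one ha hCa)
    · exact .inr (unfoldCover_eq_one hb (by omega))
  rcases hab with ⟨ha, hb, h1, h2, -, hsum⟩ | ⟨hb, ha, h1, h2, -, hsum⟩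
  · exact key (hC _ ha _ hb) h1 h2 hsum
  · exact key ((hC _ hb _ ha).trans_eq (add_comm _ _)) h2 h1 (by omega)

lemma sum_unfoldCover_Icc {u : α} {n : ℕ} (hn : C u ≤ n) :
    ∑ i ∈ Icc 1 n, unfoldCover C (u, i) = C u := by
  have hfilter : (Icc 1 n).filter (fun i => 1 ≤ i ∧ i ≤ C u) = Icc 1 (C u) := by
    ext i
    simp only [mem_filter, mem_Icc]
    omega
  simp only [unfoldCover, sum_boole, hfilter, Nat.card_Icc, Nat.cast_id, Nat.add_sub_cancel]

end unfoldCover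

theorem unfolded_cover_general
    (X Y : Finset V) (w : V → V → ℕ)
    (C : V → ℕ) (hC : IsCover X Y w C)
    (hCmin : ∀ C' : V → ℕ, IsCover X Y w C' → coverWt X Y C ≤ coverWt X Y C') :
    (∀ a b : V × ℕ, phiAdj X Y w a b →
      (if 1 ≤ a.2 ∧ a.2 ≤ C a.1 then 1 else 0) = 1 ∨
      (if 1 ≤ b.2 ∧ b.2 ≤ C b.1 then 1 else 0) = 1) ∧
    (∑ u ∈ X ∪ Y, ∑ i ∈ Finset.Icc 1 (alphaCopies X Y w u),
        (if 1 ≤ i ∧ i ≤ C u then 1 else 0)) = ∑ u ∈ X ∪ Y, C u :=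
  ⟨fun _ _ hab => unfoldCover_eq_one_or_of_phiAdj hC hab,
    sum_congr rfl fun _ hu => sum_unfoldCover_Icc (le_alphaCopies_of_minimal hC hCmin hu)⟩

/-- Folding a minimum weight cover `C` of `G` into a (0,1)-valued vertex cover of
the unfolded graph `φ(G)`: `C'(u^i) = 1` iff `i ≤ C(u)`.  Every edge of `φ(G)`
is covered, and the total value of `C'` equals the weight of `C`. -/
theorem unfolded_cover
    (X Y : Finset V) (hXY : Disjoint X Y) (w : V → V → ℕ)
    (C : V → ℕ) (hC : IsCover X Y w C)
    (hCmin : ∀ C' : V → ℕ, IsCover X Y w C' → coverWt X Y C ≤ coverWt X Y C') :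
    (∀ a b : V × ℕ, phiAdj X Y w a b →
      (if 1 ≤ a.2 ∧ a.2 ≤ C a.1 then 1 else 0) = 1 ∨
      (if 1 ≤ b.2 ∧ b.2 ≤ C b.1 then 1 else 0) = 1) ∧
    (∑ u ∈ X ∪ Y, ∑ i ∈ Finset.Icc 1 (alphaCopies X Y w u),
        (if 1 ≤ i ∧ i ≤ C u then 1 else 0)) = ∑ u ∈ X ∪ Y, C u :=
  unfolded_cover_general X Y w C hC hCmin
end

section
/- (Monotonicity of even alternating paths) Let M be a maximum weight matching of G and φ(M) its unfolding in φ(G). Fix a node u of G with copies u^1, …, u^β in φ(G). If there is an even-length alternating path for φ(M) starting from u^i, then for every j with i ≤ j ≤ β there is an even-length alternating path for φ(M) starting from u^j; moreover the paths P_i, P_{i+1}, …, P_β can be chosen pairwise node-disjoint. -/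
open Finset

variable {V : Type*} [Fintype V] [DecidableEq V]

/-- The (undirected) edge `ab` belongs to the matching `M`. -/
def inMatch {α : Type*} (M : Finset (α × α)) (a b : α) : Prop :=
  (a, b) ∈ M ∨ (b, a) ∈ M

/-- The node `a` is matched by the matching `M`. -/
def matchedBy {α : Type*} (M : Finset (α × α)) (a : α) : Prop :=
  ∃ e ∈ M, e.1 = a ∨ e.2 = a

/-- `p` is an alternating path for the matching `M` in the graph with adjacency
relation `adj`: a nonempty simple path whose edges alternate between `M` and its
complement (edge `i` is in `M` iff `i % 2 = r`, for a fixed phase `r`), and which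
contains the matched edge of each of its endpoints that is matched by `M`.
In particular a zero-length path consists of a single unmatched node. -/
def IsAltPath {α : Type*} (adj : α → α → Prop) (M : Finset (α × α))
    (p : List α) : Prop :=
  p ≠ [] ∧ p.Nodup ∧ List.Chain' adj p ∧
  ∃ r : ℕ,
    (∀ i, ∀ h : i + 1 < p.length,
      (inMatch M (p.get ⟨i, Nat.lt_of_succ_lt h⟩) (p.get ⟨i + 1, h⟩) ↔ i % 2 = r)) ∧
    (∀ h : p ≠ [], matchedBy M (p.head h) → 1 < p.length ∧ r = 0) ∧
    (∀ h : p ≠ [], matchedBy M (p.getLast h) → 1 < p.length ∧ (p.length - 2) % 2 = r)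

/-- There is an even-length (possibly zero-length) alternating path for `M`
starting at `a`.  (A path on `k` nodes has `k - 1` edges, so even length means
an odd number of nodes.) -/
def EvenAltFrom {α : Type*} (adj : α → α → Prop) (M : Finset (α × α))
    (a : α) : Prop :=
  ∃ p : List α, IsAltPath adj M p ∧ p.length % 2 = 1 ∧ ∃ h : p ≠ [], p.head h = a

/-!
Assume `u ∈ X`; the case `u ∈ Y` follows by exchanging `X` and `Y`. An even alternating path from
a matched copy `u^i` is an alternating walk from `u^i` to a free copy; take a shortest one. It
visits every node of `G` at most once: between the two visits of a first repeated node `x`, the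
walk projects to an alternating cycle of `G`, and exchanging `M` along it changes the weight by the
increase of the copy index of `x`. By maximality that index does not increase, and then the cycle
can be cut out of the walk, after shifting the rest of it, giving a shorter walk.

Raising the copy indices of the `X`-nodes of this walk by `j - i` and lowering those of its
`Y`-nodes by `j - i` keeps every edge of `φ(G)` an edge, and stopping at the first free node gives
an alternating path from `u^j`. As the walk visits each node of `G` once, the paths for different
`j` use different copies of each node, so they are disjoint.
-/

section Interleave

variable {α : Type*}

/-- The list `[a 0, b 0, a 1, b 1, …, a n]`. -/
def interleave (n : ℕ) (a b : ℕ → α) : List α :=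
  List.ofFn fun k : Fin (2 * n + 1) => if (k : ℕ) % 2 = 0 then a (k / 2) else b (k / 2)

variable {n : ℕ} {a b : ℕ → α}

@[simp]
lemma length_interleave : (interleave n a b).length = 2 * n + 1 :=
  List.length_ofFn

lemma getElem_interleave {k : ℕ} (h : k < (interleave n a b).length) :
    (interleave n a b)[k] = if k % 2 = 0 then a (k / 2) else b (k / 2) :=
  List.getElem_ofFn h

@[simp]
lemma getElem_interleave_even {t : ℕ} (h : 2 * t < (interleave n a b).length) :
    (interleave n a b)[2 * t] = a t := by
  rw [getElem_interleave]; simp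

@[simp]
lemma getElem_interleave_odd {t : ℕ} (h : 2 * t + 1 < (interleave n a b).length) :
    (interleave n a b)[2 * t + 1] = b t := by
  rw [getElem_interleave, if_neg (by omega)]; congr; omega

lemma interleave_ne_nil : interleave n a b ≠ [] :=
  List.ne_nil_of_length_pos (by simp)

@[simp]
lemma head_interleave (h : interleave n a b ≠ []) : (interleave n a b).head h = a 0 := by
  simp [interleave]

@[simp]
lemma getLast_interleave (h : interleave n a b ≠ []) :
    (interleave n a b).getLast h = a n := by
  rw [List.getLast_eq_getElem]
  simp

lemma mem_interleave {z : α} :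
    z ∈ interleave n a b ↔ (∃ t ≤ n, a t = z) ∨ ∃ t < n, b t = z := by
  simp only [interleave, List.mem_ofFn]
  constructor
  · rintro ⟨⟨k, hk⟩, rfl⟩
    simp only
    split_ifs
    · exact .inl ⟨k / 2, by omega, rfl⟩
    · exact .inr ⟨k / 2, by omega, rfl⟩
  · rintro (⟨t, ht, rfl⟩ | ⟨t, ht, rfl⟩)
    · exact ⟨⟨2 * t, by omega⟩, by simp⟩
    · refine ⟨⟨2 * t + 1, by omega⟩, ?_⟩
      simp only [Nat.mul_add_mod_self_left, Nat.reduceMod, one_ne_zero, if_false]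
      congr; omega

lemma nodup_interleave (ha : Set.InjOn a (Set.Iic n)) (hb : Set.InjOn b (Set.Iio n))
    (hab : ∀ s ≤ n, ∀ t < n, a s ≠ b t) : (interleave n a b).Nodup := by
  refine List.nodup_ofFn.2 fun k l hkl => Fin.ext ?_
  have := k.isLt; have := l.isLt
  split_ifs at hkl with hk2 hl2 hl2
  · have := ha (Set.mem_Iic.2 (by omega)) (Set.mem_Iic.2 (by omega)) hkl; omega
  · exact absurd hkl (hab _ (by omega) _ (by omega))
  · exact absurd hkl.symm (hab _ (by omega) _ (by omega))
  · have := hb (Set.mem_Iio.2 (by omega)) (Set.mem_Iio.2 (by omega)) hkl; omega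

lemma exists_eq_interleave_of_length_odd {p : List α} (hp : p.length % 2 = 1) :
    ∃ n a b, p = interleave n a b := by
  obtain ⟨d, -⟩ := List.exists_mem_of_length_pos (by omega : 0 < p.length)
  refine ⟨p.length / 2, fun t => p.getD (2 * t) d, fun t => p.getD (2 * t + 1) d,
    List.ext_getElem (by rw [length_interleave]; omega) fun k hk _ => ?_⟩
  obtain ⟨t, rfl | rfl⟩ := Nat.even_or_odd' k <;> simp [hk]

end Interleave

section AltWalk

variable {α : Type*} {adj : α → α → Prop} {N : Finset (α × α)}

lemma inMatch_comm {a b : α} : inMatch N a b ↔ inMatch N b a :=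
  Or.comm

structure IsAltWalk (adj : α → α → Prop) (N : Finset (α × α)) (n : ℕ) (a b : ℕ → α) : Prop where
  adj_left : ∀ t < n, adj (a t) (b t)
  inMatch_left : ∀ t < n, inMatch N (a t) (b t)
  adj_right : ∀ t < n, adj (b t) (a (t + 1))
  not_inMatch_right : ∀ t < n, ¬ inMatch N (b t) (a (t + 1))
  not_matchedBy_last : ¬ matchedBy N (a n)

lemma IsAltWalk.isAltPath {n : ℕ} {a b : ℕ → α} (hw : IsAltWalk adj N n a b)
    (hnd : (interleave n a b).Nodup) : IsAltPath adj N (interleave n a b) := by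
  refine ⟨interleave_ne_nil, hnd, List.isChain_iff_getElem.2 fun k hk => ?_, 0, fun k hk => ?_,
    fun _ hm => ?_, fun _ hm => absurd (by simpa using hm) hw.not_matchedBy_last⟩
  · simp only [length_interleave] at hk
    obtain ⟨t, rfl | rfl⟩ := Nat.even_or_odd' k
    · simpa using hw.adj_left t (by omega)
    · simpa [show 2 * t + 1 + 1 = 2 * (t + 1) by ring] using hw.adj_right t (by omega)
  · simp only [length_interleave] at hk
    obtain ⟨t, rfl | rfl⟩ := Nat.even_or_odd' k
    · simpa using hw.inMatch_left t (by omega)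
    · simpa [show 2 * t + 1 + 1 = 2 * (t + 1) by ring] using hw.not_inMatch_right t (by omega)
  · rcases Nat.eq_zero_or_pos n with rfl | hn
    · exact absurd (by simpa using hm) hw.not_matchedBy_last
    · exact ⟨by rw [length_interleave]; omega, rfl⟩

lemma IsAltPath.isAltWalk {n : ℕ} {a b : ℕ → α} (hp : IsAltPath adj N (interleave n a b))
    (hhead : matchedBy N (a 0)) : IsAltWalk adj N n a b := by
  obtain ⟨-, -, hchain, r, halt, hfirst, hlast⟩ := hp
  obtain ⟨-, rfl⟩ := hfirst interleave_ne_nil (by simpa using hhead)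
  replace hchain := List.isChain_iff_getElem.1 hchain
  simp only [length_interleave, List.get_eq_getElem] at hchain halt
  refine ⟨fun t ht => ?_, fun t ht => ?_, fun t ht => ?_, fun t ht => ?_, fun hm => ?_⟩
  · simpa using hchain (2 * t) (by omega)
  · simpa using (halt (2 * t) (by simp; omega)).2 (by simp)
  · simpa [show 2 * t + 1 + 1 = 2 * (t + 1) by ring] using hchain (2 * t + 1) (by omega)
  · simpa [show 2 * t + 1 + 1 = 2 * (t + 1) by ring] using halt (2 * t + 1) (by simp; omega)
  · have := hlast interleave_ne_nil (by simpa using hm)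
    simp only [length_interleave] at this
    omega

end AltWalk

section FirstRepeat

variable {β : Type*} {f : ℕ → β}

lemma exists_first_repeat {n : ℕ} (h : ¬ Set.InjOn f (Set.Iic n)) :
    ∃ s t, s < t ∧ t ≤ n ∧ f t = f s ∧ Set.InjOn f (Set.Iio t) := by
  classical
  have hex : ∃ t, t ≤ n ∧ ∃ s < t, f t = f s := by
    simp only [Set.InjOn, not_forall] at h
    obtain ⟨x, hx, y, hy, hxy, hne⟩ := h
    rcases lt_or_gt_of_ne hne with hlt | hlt
    · exact ⟨y, hy, x, hlt, hxy.symm⟩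
    · exact ⟨x, hx, y, hlt, hxy⟩
  obtain ⟨htn, s, hst, hts⟩ := Nat.find_spec hex
  refine ⟨s, _, hst, htn, hts, fun x hx y hy hxy => ?_⟩
  rw [Set.mem_Iio] at hx hy
  by_contra hne
  rcases lt_or_gt_of_ne hne with hlt | hlt
  · exact Nat.find_min hex hy ⟨by omega, x, hlt, hxy.symm⟩
  · exact Nat.find_min hex hx ⟨by omega, y, hlt, hxy⟩

variable {s t : ℕ}

lemma injOn_Ico_succ (hf : Set.InjOn f (Set.Ico s t)) (hts : f t = f s) :
    Set.InjOn (fun r => f (r + 1)) (Set.Ico s t) := by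
  intro r hr q hq h
  simp only [Set.mem_Ico] at hr hq h
  have hs : s ∈ Set.Ico s t := ⟨le_rfl, by omega⟩
  by_cases hr' : r + 1 = t <;> by_cases hq' : q + 1 = t
  · omega
  · have := hf (⟨by omega, by omega⟩ : q + 1 ∈ Set.Ico s t) hs (by rw [← h, hr', hts]); omega
  · have := hf (⟨by omega, by omega⟩ : r + 1 ∈ Set.Ico s t) hs (by rw [h, hq', hts]); omega
  · exact Nat.succ_injective (hf ⟨by omega, by omega⟩ ⟨by omega, by omega⟩ h)

lemma exists_mem_Ico_eq_succ (hts : f t = f s) {r : ℕ} (hr : r ∈ Set.Ico s t) :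
    ∃ q ∈ Set.Ico s t, f q = f (r + 1) := by
  obtain ⟨hsr, hrt⟩ := hr
  by_cases h : r + 1 = t
  · exact ⟨s, ⟨le_rfl, by omega⟩, by rw [← hts, h]⟩
  · exact ⟨r + 1, ⟨by omega, by omega⟩, rfl⟩

end FirstRepeat

section Graph

omit [Fintype V] [DecidableEq V]

variable {X Y : Finset V} {w : V → V → ℕ} {M : Finset (V × V)}

lemma IsBMatching.snd_eq (hM : IsBMatching X Y w M) {x y y' : V} (h : (x, y) ∈ M)
    (h' : (x, y') ∈ M) : y = y' := by
  by_contra hne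
  exact (hM.2 _ h _ h' (by simp [hne])).1 rfl

lemma IsBMatching.fst_eq (hM : IsBMatching X Y w M) {x x' y : V} (h : (x, y) ∈ M)
    (h' : (x', y) ∈ M) : x = x' := by
  by_contra hne
  exact (hM.2 _ h _ h' (by simp [hne])).2 rfl

lemma phiAdj_comm {a b : V × ℕ} : phiAdj X Y w a b ↔ phiAdj X Y w b a := by
  unfold phiAdj
  constructor <;> rintro (h | h) <;> [right; left; right; left] <;> exact h

lemma phiAdj_iff_of_mem_X (hXY : Disjoint X Y) {a b : V × ℕ} (ha : a.1 ∈ X) :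
    phiAdj X Y w a b ↔
      b.1 ∈ Y ∧ 1 ≤ a.2 ∧ 1 ≤ b.2 ∧ 0 < w a.1 b.1 ∧ a.2 + b.2 = w a.1 b.1 + 1 := by
  have := Finset.disjoint_left.1 hXY ha
  unfold phiAdj
  constructor
  · rintro (⟨-, h⟩ | ⟨-, h, -⟩)
    · exact h
    · exact absurd h this
  · exact fun h => .inl ⟨ha, h⟩

lemma phiAdj_iff_of_mem_Y (hXY : Disjoint X Y) {a b : V × ℕ} (hb : b.1 ∈ Y) :
    phiAdj X Y w a b ↔
      a.1 ∈ X ∧ 1 ≤ a.2 ∧ 1 ≤ b.2 ∧ 0 < w a.1 b.1 ∧ a.2 + b.2 = w a.1 b.1 + 1 := by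
  have := Finset.disjoint_right.1 hXY hb
  unfold phiAdj
  constructor
  · rintro (⟨ha, -, h⟩ | ⟨h, -⟩)
    · exact ⟨ha, h⟩
    · exact absurd h this
  · exact fun ⟨ha, h⟩ => .inl ⟨ha, hb, h⟩

end Graph

section Unfolding

omit [Fintype V]

variable {X Y : Finset V} {w : V → V → ℕ} {M : Finset (V × V)}

lemma mem_phiM_iff {x y : V} {c d : ℕ} :
    ((x, c), (y, d)) ∈ phiM w M ↔ (x, y) ∈ M ∧ 1 ≤ c ∧ 1 ≤ d ∧ c + d = w x y + 1 := by
  simp only [phiM, Finset.mem_biUnion, Finset.mem_image, Finset.mem_Icc, Prod.mk.injEq]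
  constructor
  · rintro ⟨⟨x, y⟩, he, k, hk, ⟨rfl, rfl⟩, rfl, rfl⟩
    dsimp only at hk ⊢
    exact ⟨he, hk.1, by omega, by omega⟩
  · rintro ⟨he, hc, hd, hcd⟩
    refine ⟨(x, y), he, c, ⟨hc, ?_⟩, ⟨rfl, rfl⟩, rfl, ?_⟩ <;> dsimp only <;> omega

lemma matchedBy_phiM_iff {z : V} {c : ℕ} :
    matchedBy (phiM w M) (z, c) ↔ ∃ e ∈ M, (z = e.1 ∨ z = e.2) ∧ 1 ≤ c ∧ c ≤ w e.1 e.2 := by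
  constructor
  · rintro ⟨⟨⟨x, c'⟩, ⟨y, d⟩⟩, he, h⟩
    obtain ⟨he, hc, hd, hcd⟩ := mem_phiM_iff.1 he
    simp only [Prod.mk.injEq] at h
    rcases h with ⟨rfl, rfl⟩ | ⟨rfl, rfl⟩
    · exact ⟨_, he, .inl rfl, hc, by dsimp only; omega⟩
    · exact ⟨_, he, .inr rfl, hd, by dsimp only; omega⟩
  · rintro ⟨⟨x, y⟩, he, hz, hc, hcw⟩
    dsimp only at hz hcw
    rcases hz with hz | hz <;> subst hz
    · exact ⟨((z, c), (y, w z y + 1 - c)), mem_phiM_iff.2 ⟨he, hc, by omega, by omega⟩, .inl rfl⟩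
    · exact ⟨((x, w x z + 1 - c), (z, c)), mem_phiM_iff.2 ⟨he, by omega, hc, by omega⟩, .inr rfl⟩

lemma matchedBy_phiM_of_le {z : V} {c c' : ℕ} (h : matchedBy (phiM w M) (z, c')) (hc : 1 ≤ c)
    (hcc' : c ≤ c') : matchedBy (phiM w M) (z, c) := by
  obtain ⟨e, he, hz, -, hc'⟩ := matchedBy_phiM_iff.1 h
  exact matchedBy_phiM_iff.2 ⟨e, he, hz, hc, hcc'.trans hc'⟩

variable (hXY : Disjoint X Y) (hM : IsBMatching X Y w M)
include hXY hM

lemma inMatch_phiM_iff_of_mem_X {a b : V × ℕ} (ha : a.1 ∈ X) :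
    inMatch (phiM w M) a b ↔ (a.1, b.1) ∈ M ∧ 1 ≤ a.2 ∧ 1 ≤ b.2 ∧ a.2 + b.2 = w a.1 b.1 + 1 := by
  unfold inMatch
  rw [← mem_phiM_iff, or_iff_left fun h => ?_]
  exact Finset.disjoint_left.1 hXY ha (hM.1 _ (mem_phiM_iff.1 h).1).2.1

lemma matchedBy_phiM_iff_of_mem_X {z : V} {c : ℕ} (hz : z ∈ X) :
    matchedBy (phiM w M) (z, c) ↔ ∃ y, (z, y) ∈ M ∧ 1 ≤ c ∧ c ≤ w z y := by
  rw [matchedBy_phiM_iff]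
  constructor
  · rintro ⟨⟨x, y⟩, he, hz' | hz', hc⟩
    · dsimp only at hz'; subst hz'
      exact ⟨y, he, hc⟩
    · exact absurd (hz' ▸ (hM.1 _ he).2.1) (Finset.disjoint_left.1 hXY hz)
  · rintro ⟨y, he, hc⟩
    exact ⟨_, he, .inl rfl, hc⟩

end Unfolding

section XWalk

omit [Fintype V]

variable {X Y : Finset V} {w : V → V → ℕ} {M : Finset (V × V)}

/-- The copies `x, y, x'` span an edge `x y` of `φ(M)` followed by an edge `y x'` of `φ(G)` outside
`φ(M)`, expressed through the underlying edges of `G`. -/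
structure AltStep (w : V → V → ℕ) (M : Finset (V × V)) (x y x' : V × ℕ) : Prop where
  mem : (x.1, y.1) ∈ M
  one_le : 1 ≤ y.2
  matched_add : x.2 + y.2 = w x.1 y.1 + 1
  not_mem : (x'.1, y.1) ∉ M
  unmatched_add : x'.2 + y.2 = w x'.1 y.1 + 1

structure XWalk (X : Finset V) (w : V → V → ℕ) (M : Finset (V × V)) (n : ℕ) (a b : ℕ → V × ℕ) :
    Prop where
  mem_X : ∀ t ≤ n, (a t).1 ∈ X
  one_le : ∀ t ≤ n, 1 ≤ (a t).2
  step : ∀ t < n, AltStep w M (a t) (b t) (a (t + 1))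
  not_matchedBy_last : ¬ matchedBy (phiM w M) (a n)

variable {n : ℕ} {a b : ℕ → V × ℕ}

lemma XWalk.mem_Y (hM : IsBMatching X Y w M) (hw : XWalk X w M n a b) {t : ℕ} (ht : t < n) :
    (b t).1 ∈ Y :=
  (hM.1 _ (hw.step t ht).mem).2.1

lemma XWalk.injOn_partner (hM : IsBMatching X Y w M) (hw : XWalk X w M n a b) {S : Set ℕ}
    (hS : S ⊆ Set.Iio n) (hinj : Set.InjOn (fun r => (a r).1) S) :
    Set.InjOn (fun r => (b r).1) S := by
  intro r hr q hq h
  refine hinj hr hq (hM.fst_eq (hw.step r (hS hr)).mem ?_)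
  rw [show (b r).1 = (b q).1 from h]
  exact (hw.step q (hS hq)).mem

variable (hXY : Disjoint X Y) (hM : IsBMatching X Y w M)
include hXY hM

lemma XWalk.isAltWalk (hw : XWalk X w M n a b) :
    IsAltWalk (phiAdj X Y w) (phiM w M) n a b := by
  refine ⟨fun t ht => ?_, fun t ht => ?_, fun t ht => ?_, fun t ht hm => ?_, hw.not_matchedBy_last⟩
  · have hs := hw.step t ht
    exact (phiAdj_iff_of_mem_X hXY (hw.mem_X t ht.le)).2
      ⟨hw.mem_Y hM ht, hw.one_le t ht.le, hs.one_le, (hM.1 _ hs.mem).2.2, hs.matched_add⟩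
  · have hs := hw.step t ht
    exact (inMatch_phiM_iff_of_mem_X hXY hM (hw.mem_X t ht.le)).2
      ⟨hs.mem, hw.one_le t ht.le, hs.one_le, hs.matched_add⟩
  · have hs := hw.step t ht
    have hone := hw.one_le (t + 1) ht
    exact phiAdj_comm.1 <| (phiAdj_iff_of_mem_X hXY (hw.mem_X (t + 1) ht)).2
      ⟨hw.mem_Y hM ht, hone, hs.one_le, by have := hs.unmatched_add; have := hs.one_le; omega,
        hs.unmatched_add⟩
  · exact (hw.step t ht).not_mem
      ((inMatch_phiM_iff_of_mem_X hXY hM (hw.mem_X (t + 1) ht)).1 (inMatch_comm.1 hm)).1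

lemma IsAltWalk.xWalk (hw : IsAltWalk (phiAdj X Y w) (phiM w M) n a b) (hX : (a 0).1 ∈ X)
    (hone : 1 ≤ (a 0).2) : XWalk X w M n a b := by
  have hmatched (t : ℕ) (ht : t < n) (hXt : (a t).1 ∈ X) :=
    (inMatch_phiM_iff_of_mem_X hXY hM hXt).1 (hw.inMatch_left t ht)
  have hunmatched (t : ℕ) (ht : t < n) (hXt : (a t).1 ∈ X) :=
    (phiAdj_iff_of_mem_Y hXY (hM.1 _ (hmatched t ht hXt).1).2.1).1
      (phiAdj_comm.1 (hw.adj_right t ht))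
  have hmem_X : ∀ t ≤ n, (a t).1 ∈ X := by
    intro t ht
    induction t with
    | zero => exact hX
    | succ t ih => exact (hunmatched t ht (ih (by omega))).1
  refine ⟨hmem_X, fun t ht => ?_, fun t ht => ?_, hw.not_matchedBy_last⟩
  · cases t with
    | zero => exact hone
    | succ t => exact (hunmatched t ht (hmem_X t (by omega))).2.1
  · obtain ⟨hmem, -, hone_b, hadd⟩ := hmatched t ht (hmem_X t ht.le)
    obtain ⟨-, hone', -, -, hadd'⟩ := hunmatched t ht (hmem_X t ht.le)
    refine ⟨hmem, hone_b, hadd, fun h => hw.not_inMatch_right t ht ?_, hadd'⟩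
    exact inMatch_comm.1 ((inMatch_phiM_iff_of_mem_X hXY hM (hmem_X (t + 1) ht)).2
      ⟨h, hone', hone_b, hadd'⟩)

lemma XWalk.isAltPath (hw : XWalk X w M n a b)
    (hinj : Set.InjOn (fun t => (a t).1) (Set.Iic n)) :
    IsAltPath (phiAdj X Y w) (phiM w M) (interleave n a b) := by
  refine (hw.isAltWalk hXY hM).isAltPath (nodup_interleave hinj.of_comp ?_ ?_)
  · exact (hw.injOn_partner hM subset_rfl (hinj.mono Set.Iio_subset_Iic_self)).of_comp
  · intro s hs t ht hst
    exact Finset.disjoint_left.1 hXY (hw.mem_X s hs) (hst ▸ hw.mem_Y hM ht)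

end XWalk

section Surgery

omit [Fintype V]

variable {X Y : Finset V} {w : V → V → ℕ} {M : Finset (V × V)}

lemma IsBMatching.exchange (hM : IsBMatching X Y w M) {D A : Finset (V × V)} (hD : D ⊆ M)
    (hA : IsBMatching X Y w A) (hcov : ∀ f ∈ A, (∃ d ∈ D, d.1 = f.1) ∧ ∃ d ∈ D, d.2 = f.2) :
    IsBMatching X Y w (M \ D ∪ A) ∧ mWt w (M \ D ∪ A) + mWt w D = mWt w M + mWt w A := by
  have hsep : ∀ e ∈ M \ D, ∀ f ∈ A, e.1 ≠ f.1 ∧ e.2 ≠ f.2 := by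
    intro e he f hf
    obtain ⟨heM, heD⟩ := Finset.mem_sdiff.1 he
    obtain ⟨⟨d, hd, hd1⟩, ⟨d', hd', hd2⟩⟩ := hcov f hf
    exact ⟨hd1 ▸ (hM.2 e heM d (hD hd) (by rintro rfl; exact heD hd)).1,
      hd2 ▸ (hM.2 e heM d' (hD hd') (by rintro rfl; exact heD hd')).2⟩
  have hdisj : Disjoint (M \ D) A := Finset.disjoint_left.2 fun {e} he hf => (hsep e he e hf).1 rfl
  refine ⟨⟨fun e he => ?_, fun e he f hf hef => ?_⟩, ?_⟩
  · rcases Finset.mem_union.1 he with he | he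
    · exact hM.1 e (Finset.mem_sdiff.1 he).1
    · exact hA.1 e he
  · rcases Finset.mem_union.1 he with he | he <;> rcases Finset.mem_union.1 hf with hf | hf
    · exact hM.2 e (Finset.mem_sdiff.1 he).1 f (Finset.mem_sdiff.1 hf).1 hef
    · exact hsep e he f hf
    · exact (hsep f hf e he).imp Ne.symm Ne.symm
    · exact hA.2 e he f hf hef
  · unfold mWt
    rw [Finset.sum_union hdisj, add_right_comm, Finset.sum_sdiff hD]

variable {n : ℕ} {a b : ℕ → V × ℕ}

lemma XWalk.tail (hw : XWalk X w M n a b) {t : ℕ} (ht : t ≤ n) :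
    XWalk X w M (n - t) (fun r => a (t + r)) (fun r => b (t + r)) :=
  ⟨fun r hr => hw.mem_X _ (by omega), fun r hr => hw.one_le _ (by omega),
    fun r hr => hw.step (t + r) (by omega),
    by simpa [Nat.add_sub_cancel' ht] using hw.not_matchedBy_last⟩

lemma XWalk.append (hw : XWalk X w M n a b) {s : ℕ} (hs : s ≤ n) {m : ℕ} {a' b' : ℕ → V × ℕ}
    (hw' : XWalk X w M m a' b') (h0 : a' 0 = a s) :
    XWalk X w M (s + m) (fun r => if r < s then a r else a' (r - s))
      (fun r => if r < s then b r else b' (r - s)) := by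
  have ha : ∀ r ≤ s, (if r < s then a r else a' (r - s)) = a r := by
    intro r hr
    split_ifs with h
    · rfl
    · rw [show r = s by omega, Nat.sub_self, h0]
  refine ⟨fun r hr => ?_, fun r hr => ?_, fun r hr => ?_, ?_⟩
  · split_ifs
    · exact hw.mem_X r (by omega)
    · exact hw'.mem_X (r - s) (by omega)
  · split_ifs
    · exact hw.one_le r (by omega)
    · exact hw'.one_le (r - s) (by omega)
  · by_cases h : r < s
    · rw [ha (r + 1) h, if_pos h, if_pos h]
      exact hw.step r (by omega)
    · rw [if_neg h, if_neg h, if_neg (by omega), show r + 1 - s = r - s + 1 by omega]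
      exact hw'.step (r - s) (by omega)
  · rw [if_neg (by omega), Nat.add_sub_cancel_left]
    exact hw'.not_matchedBy_last

lemma XWalk.sum_add_eq (hw : XWalk X w M n a b) {s t : ℕ} (hst : s ≤ t) (htn : t ≤ n) :
    ∑ r ∈ Finset.Ico s t, w (a (r + 1)).1 (b r).1 + (a s).2 =
      ∑ r ∈ Finset.Ico s t, w (a r).1 (b r).1 + (a t).2 := by
  induction t, hst using Nat.le_induction with
  | base => simp
  | succ t hst ih =>
    have hs := hw.step t (by omega)
    rw [Finset.sum_Ico_succ_top hst, Finset.sum_Ico_succ_top hst]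
    have := ih (by omega)
    have := hs.matched_add
    have := hs.unmatched_add
    omega

variable (hXY : Disjoint X Y) (hM : IsBMatching X Y w M)
include hXY hM

lemma XWalk.exists_shift (hw : XWalk X w M n a b) (δ : ℕ) :
    ∃ m ≤ n, XWalk X w M m (fun r => ((a r).1, (a r).2 + δ)) (fun r => ((b r).1, (b r).2 - δ)) := by
  classical
  have hex : ∃ m, ¬ matchedBy (phiM w M) ((a m).1, (a m).2 + δ) ∧ m ≤ n :=
    ⟨n, fun h => hw.not_matchedBy_last (matchedBy_phiM_of_le h (hw.one_le n le_rfl) (by omega)),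
      le_rfl⟩
  obtain ⟨hfree, hm⟩ := Nat.find_spec hex
  refine ⟨Nat.find hex, hm, fun r hr => hw.mem_X r (hr.trans hm), fun r hr => ?_,
    fun r hr => ?_, hfree⟩
  · have := hw.one_le r (hr.trans hm)
    dsimp only
    omega
  have hs := hw.step r (by omega)
  have hmatched : matchedBy (phiM w M) ((a r).1, (a r).2 + δ) := by
    by_contra h
    exact Nat.find_min hex hr ⟨h, by omega⟩
  obtain ⟨y, hy, -, hle⟩ := (matchedBy_phiM_iff_of_mem_X hXY hM (hw.mem_X r (by omega))).1 hmatched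
  obtain rfl := hM.snd_eq hy hs.mem
  have := hs.one_le
  have := hs.matched_add
  have := hs.unmatched_add
  exact ⟨hs.mem, by dsimp only; omega, by dsimp only; omega, hs.not_mem, by dsimp only; omega⟩

lemma XWalk.exists_shorter (hw : XWalk X w M n a b) {s t : ℕ} (hst : s < t) (htn : t ≤ n)
    (hcyc : (a t).1 = (a s).1) (hle : (a t).2 ≤ (a s).2) :
    ∃ m < n, ∃ a' b', XWalk X w M m a' b' ∧ a' 0 = a 0 := by
  obtain ⟨m, hm, hw'⟩ := (hw.tail htn).exists_shift hXY hM ((a s).2 - (a t).2)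
  have h0 : ((a t).1, (a t).2 + ((a s).2 - (a t).2)) = a s :=
    Prod.ext hcyc (by dsimp only; omega)
  refine ⟨s + m, by omega, _, _, hw.append (hst.le.trans htn) hw' h0, ?_⟩
  split_ifs with h
  · rfl
  · obtain rfl : s = 0 := by omega
    exact h0

end Surgery

section Maximality

omit [Fintype V]

variable {X Y : Finset V} {w : V → V → ℕ} {M : Finset (V × V)} {n : ℕ} {a b : ℕ → V × ℕ}

lemma XWalk.isBMatching_cycle (hM : IsBMatching X Y w M) (hw : XWalk X w M n a b) {s t : ℕ}
    (htn : t ≤ n) (hinj : Set.InjOn (fun r => (a r).1) (Set.Ico s t)) (hcyc : (a t).1 = (a s).1) :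
    IsBMatching X Y w ((Finset.Ico s t).image fun r => ((a (r + 1)).1, (b r).1)) := by
  have hIco : ∀ r ∈ Finset.Ico s t, r ∈ Set.Ico s t ∧ r < n := fun r hr => by
    rw [Finset.mem_Ico] at hr; exact ⟨hr, by omega⟩
  refine ⟨?_, ?_⟩
  · simp only [Finset.forall_mem_image]
    intro r hr
    have hs := hw.step r (hIco r hr).2
    have := hw.one_le (r + 1) (hIco r hr).2
    have := hs.one_le
    exact ⟨hw.mem_X (r + 1) (hIco r hr).2, hw.mem_Y hM (hIco r hr).2,
      by have := hs.unmatched_add; omega⟩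
  · simp only [Finset.forall_mem_image]
    intro r hr q hq hne
    have hrq : r ≠ q := by rintro rfl; exact hne rfl
    exact ⟨fun h => hrq (injOn_Ico_succ hinj hcyc (hIco r hr).1 (hIco q hq).1 h),
      fun h => hrq (hw.injOn_partner hM (fun r hr => lt_of_lt_of_le hr.2 htn) hinj
        (hIco r hr).1 (hIco q hq).1 h)⟩

/-- Exchanging `M` along the cycle of `G` traced by `a s, b s, …, a t` changes the weight by
`(a t).2 - (a s).2`. -/
lemma XWalk.le_of_cycle (hM : IsBMatching X Y w M)
    (hMmax : ∀ M' : Finset (V × V), IsBMatching X Y w M' → mWt w M' ≤ mWt w M)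
    (hw : XWalk X w M n a b) {s t : ℕ} (hst : s ≤ t) (htn : t ≤ n)
    (hinj : Set.InjOn (fun r => (a r).1) (Set.Ico s t)) (hcyc : (a t).1 = (a s).1) :
    (a t).2 ≤ (a s).2 := by
  have hIco : ∀ r ∈ Finset.Ico s t, r ∈ Set.Ico s t ∧ r < n := fun r hr => by
    rw [Finset.mem_Ico] at hr; exact ⟨hr, by omega⟩
  have hbinj := hw.injOn_partner hM (fun r hr => lt_of_lt_of_le hr.2 htn) hinj
  set D := (Finset.Ico s t).image fun r => ((a r).1, (b r).1)
  set A := (Finset.Ico s t).image fun r => ((a (r + 1)).1, (b r).1)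
  have hD : D ⊆ M := Finset.image_subset_iff.2 fun r hr => (hw.step r (hIco r hr).2).mem
  have hcov : ∀ f ∈ A, (∃ d ∈ D, d.1 = f.1) ∧ ∃ d ∈ D, d.2 = f.2 := by
    simp only [A, Finset.forall_mem_image]
    intro r hr
    obtain ⟨q, hq, hqr⟩ := exists_mem_Ico_eq_succ (f := fun r => (a r).1) hcyc (hIco r hr).1
    exact ⟨⟨_, Finset.mem_image_of_mem _ (Finset.mem_Ico.2 hq), hqr⟩,
      ⟨_, Finset.mem_image_of_mem _ hr, rfl⟩⟩
  have hA : IsBMatching X Y w A := hw.isBMatching_cycle hM htn hinj hcyc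
  obtain ⟨hM', hwt⟩ := hM.exchange hD hA hcov
  have hD_wt : mWt w D = ∑ r ∈ Finset.Ico s t, w (a r).1 (b r).1 :=
    Finset.sum_image fun r hr q hq h => hinj (hIco r hr).1 (hIco q hq).1 (Prod.ext_iff.1 h).1
  have hA_wt : mWt w A = ∑ r ∈ Finset.Ico s t, w (a (r + 1)).1 (b r).1 :=
    Finset.sum_image fun r hr q hq h => hbinj (hIco r hr).1 (hIco q hq).1 (Prod.ext_iff.1 h).2
  have := hMmax _ hM'
  have := hw.sum_add_eq hst htn
  omega

variable (hXY : Disjoint X Y) (hM : IsBMatching X Y w M)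
  (hMmax : ∀ M' : Finset (V × V), IsBMatching X Y w M' → mWt w M' ≤ mWt w M)
include hXY hM hMmax

lemma XWalk.exists_injOn (hw : XWalk X w M n a b) :
    ∃ m a' b', XWalk X w M m a' b' ∧ a' 0 = a 0 ∧ Set.InjOn (fun r => (a' r).1) (Set.Iic m) := by
  classical
  have hex : ∃ m a' b', XWalk X w M m a' b' ∧ a' 0 = a 0 := ⟨n, a, b, hw, rfl⟩
  obtain ⟨a', b', hw', h0⟩ := Nat.find_spec hex
  refine ⟨_, a', b', hw', h0, ?_⟩
  by_contra hinj
  obtain ⟨s, t, hst, htn, hcyc, hinjt⟩ := exists_first_repeat hinj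
  have hle := hw'.le_of_cycle hM hMmax hst.le htn (hinjt.mono Set.Ico_subset_Iio_self) hcyc
  obtain ⟨m, hm, a'', b'', hw'', h0''⟩ := hw'.exists_shorter hXY hM hst htn hcyc hle
  exact Nat.find_min hex hm ⟨a'', b'', hw'', h0''.trans h0⟩

end Maximality

section XSide

omit [Fintype V]

variable {X Y : Finset V} {w : V → V → ℕ} {M : Finset (V × V)}
  (hXY : Disjoint X Y) (hM : IsBMatching X Y w M)
include hXY hM

lemma exists_xWalk_of_evenAltFrom {u : V} (hu : u ∈ X) {i : ℕ} (hi : 1 ≤ i)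
    (h : EvenAltFrom (phiAdj X Y w) (phiM w M) (u, i)) :
    ∃ n a b, XWalk X w M n a b ∧ a 0 = (u, i) := by
  by_cases hm : matchedBy (phiM w M) (u, i)
  · obtain ⟨p, hp, hodd, hne, hhead⟩ := h
    obtain ⟨n, a, b, rfl⟩ := exists_eq_interleave_of_length_odd hodd
    rw [head_interleave] at hhead
    exact ⟨n, a, b, (hp.isAltWalk (hhead ▸ hm)).xWalk hXY hM (by rw [hhead]; exact hu)
      (by rw [hhead]; exact hi), hhead⟩
  · exact ⟨0, fun _ => (u, i), fun _ => (u, i),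
      ⟨fun _ _ => hu, fun _ _ => hi, fun _ h => absurd h (Nat.not_lt_zero _), hm⟩, rfl⟩

lemma XWalk.disjoint_shift {n : ℕ} {a b : ℕ → V × ℕ} (hw : XWalk X w M n a b)
    (hinj : Set.InjOn (fun r => (a r).1) (Set.Iic n)) {δ δ' m m' : ℕ} (hδ : δ < δ')
    (hm : m ≤ n) (hm' : m' ≤ n)
    (hw' : XWalk X w M m' (fun r => ((a r).1, (a r).2 + δ')) (fun r => ((b r).1, (b r).2 - δ'))) :
    List.Disjoint (interleave m (fun r => ((a r).1, (a r).2 + δ)) (fun r => ((b r).1, (b r).2 - δ)))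
      (interleave m' (fun r => ((a r).1, (a r).2 + δ')) (fun r => ((b r).1, (b r).2 - δ'))) := by
  intro z hz hz'
  rw [mem_interleave] at hz hz'
  rcases hz with ⟨r, hr, rfl⟩ | ⟨r, hr, rfl⟩ <;> rcases hz' with ⟨q, hq, h⟩ | ⟨q, hq, h⟩ <;>
    simp only [Prod.mk.injEq] at h
  · obtain rfl := hinj (Set.mem_Iic.2 (by omega)) (Set.mem_Iic.2 (by omega)) h.1
    omega
  · exact Finset.disjoint_left.1 hXY (hw.mem_X r (by omega)) (h.1 ▸ hw.mem_Y hM (by omega))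
  · exact Finset.disjoint_left.1 hXY (hw.mem_X q (by omega)) (h.1.symm ▸ hw.mem_Y hM (by omega))
  · obtain rfl := hw.injOn_partner hM subset_rfl
      (hinj.mono Set.Iio_subset_Iic_self) (Set.mem_Iio.2 (by omega)) (Set.mem_Iio.2 (by omega)) h.1
    have := (hw'.step q hq).one_le
    dsimp only at this
    omega

variable (hMmax : ∀ M' : Finset (V × V), IsBMatching X Y w M' → mWt w M' ≤ mWt w M)
include hMmax

theorem exists_disjoint_evenAltPaths_of_mem_X {u : V} (hu : u ∈ X) {i : ℕ} (hi : 1 ≤ i)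
    (hstart : EvenAltFrom (phiAdj X Y w) (phiM w M) (u, i)) :
    ∃ P : ℕ → List (V × ℕ),
      (∀ j, i ≤ j → IsAltPath (phiAdj X Y w) (phiM w M) (P j) ∧ (P j).length % 2 = 1 ∧
        ∃ h : P j ≠ [], (P j).head h = (u, j)) ∧
      ∀ j k, i ≤ j → j < k → List.Disjoint (P j) (P k) := by
  obtain ⟨n₀, a₀, b₀, hw₀, h₀⟩ := exists_xWalk_of_evenAltFrom hXY hM hu hi hstart
  obtain ⟨n, a, b, hw, ha, hinj⟩ := hw₀.exists_injOn hXY hM hMmax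
  choose N hN hwN using fun j => hw.exists_shift hXY hM (j - i)
  refine ⟨fun j => interleave (N j) (fun r => ((a r).1, (a r).2 + (j - i)))
    (fun r => ((b r).1, (b r).2 - (j - i))), fun j hj => ⟨?_, by simp, interleave_ne_nil, ?_⟩,
    fun j k hj hjk => hw.disjoint_shift hXY hM hinj (by omega) (hN j) (hN k) (hwN k)⟩
  · exact (hwN j).isAltPath hXY hM (hinj.mono (Set.Iic_subset_Iic.2 (hN j)))
  · rw [head_interleave, ha, h₀]
    simp only [Prod.mk.injEq, true_and]
    omega

end XSide

section Swap

section General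

variable {α : Type*} [DecidableEq α] {adj : α → α → Prop} {N : Finset (α × α)}

lemma mem_image_swap {β : Type*} [DecidableEq β] {s : Finset (β × α)} {e : α × β} :
    e ∈ s.image Prod.swap ↔ e.swap ∈ s := by
  refine ⟨fun h => ?_, fun h => Finset.mem_image.2 ⟨e.swap, h, e.swap_swap⟩⟩
  obtain ⟨f, hf, rfl⟩ := Finset.mem_image.1 h
  rwa [Prod.swap_swap]

lemma inMatch_image_swap {a b : α} : inMatch (N.image Prod.swap) a b ↔ inMatch N a b := by
  simp only [inMatch, mem_image_swap, Prod.swap_prod_mk, or_comm]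

lemma matchedBy_image_swap {a : α} : matchedBy (N.image Prod.swap) a ↔ matchedBy N a := by
  constructor
  · rintro ⟨e, he, h⟩
    exact ⟨e.swap, mem_image_swap.1 he, h.symm⟩
  · rintro ⟨e, he, h⟩
    exact ⟨e.swap, Finset.mem_image_of_mem _ he, h.symm⟩

lemma isAltPath_image_swap {p : List α} :
    IsAltPath adj (N.image Prod.swap) p ↔ IsAltPath adj N p := by
  simp only [IsAltPath, inMatch_image_swap, matchedBy_image_swap]

lemma evenAltFrom_image_swap {a : α} :
    EvenAltFrom adj (N.image Prod.swap) a ↔ EvenAltFrom adj N a := by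
  simp only [EvenAltFrom, isAltPath_image_swap]

end General

omit [Fintype V]

variable {X Y : Finset V} {w : V → V → ℕ} {M : Finset (V × V)}

omit [DecidableEq V] in
lemma phiAdj_flip : phiAdj Y X (flip w) = phiAdj X Y w := by
  ext a b
  unfold phiAdj flip
  constructor <;> rintro (⟨h1, h2, h3, h4, h5, h6⟩ | ⟨h1, h2, h3, h4, h5, h6⟩) <;>
    [right; left; right; left] <;> exact ⟨h2, h1, h4, h3, h5, by omega⟩

lemma phiM_image_swap : phiM (flip w) (M.image Prod.swap) = (phiM w M).image Prod.swap := by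
  ext ⟨⟨x, c⟩, ⟨y, d⟩⟩
  rw [mem_image_swap, Prod.swap_prod_mk, mem_phiM_iff, mem_phiM_iff, mem_image_swap,
    Prod.swap_prod_mk]
  unfold flip
  constructor <;> rintro ⟨h1, h2, h3, h4⟩ <;> exact ⟨h1, h3, h2, by omega⟩

lemma IsBMatching.image_swap (hM : IsBMatching X Y w M) :
    IsBMatching Y X (flip w) (M.image Prod.swap) := by
  refine ⟨fun e he => ?_, fun e he f hf hef => ?_⟩
  · obtain ⟨h1, h2, h3⟩ := hM.1 _ (mem_image_swap.1 he)
    exact ⟨h2, h1, h3⟩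
  · exact (hM.2 _ (mem_image_swap.1 he) _ (mem_image_swap.1 hf)
      fun h => hef (Prod.swap_injective h)).symm

lemma mWt_image_swap : mWt (flip w) (M.image Prod.swap) = mWt w M :=
  Finset.sum_image fun _ _ _ _ h => Prod.swap_injective h

lemma forall_mWt_le_image_swap
    (hMmax : ∀ M' : Finset (V × V), IsBMatching X Y w M' → mWt w M' ≤ mWt w M) :
    ∀ M' : Finset (V × V), IsBMatching Y X (flip w) M' →
      mWt (flip w) M' ≤ mWt (flip w) (M.image Prod.swap) := by
  intro M' hM'
  calc mWt (flip w) M' = mWt w (M'.image Prod.swap) := mWt_image_swap.symm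
    _ ≤ mWt w M := hMmax _ hM'.image_swap
    _ = mWt (flip w) (M.image Prod.swap) := mWt_image_swap.symm

end Swap

theorem even_alt_path_monotone_general
    (X Y : Finset V) (hXY : Disjoint X Y) (w : V → V → ℕ)
    (M : Finset (V × V)) (hM : IsBMatching X Y w M)
    (hMmax : ∀ M' : Finset (V × V), IsBMatching X Y w M' → mWt w M' ≤ mWt w M)
    (u : V) (hu : u ∈ X ∪ Y) (i : ℕ) (hi1 : 1 ≤ i)
    (hstart : EvenAltFrom (phiAdj X Y w) (phiM w M) (u, i)) :
    ∃ P : ℕ → List (V × ℕ),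
      (∀ j, i ≤ j → j ≤ alphaCopies X Y w u →
        IsAltPath (phiAdj X Y w) (phiM w M) (P j) ∧ (P j).length % 2 = 1 ∧
        ∃ h : P j ≠ [], (P j).head h = (u, j)) ∧
      (∀ j k, i ≤ j → j < k → k ≤ alphaCopies X Y w u →
        List.Disjoint (P j) (P k)) := by
  rcases Finset.mem_union.1 hu with huX | huY
  · obtain ⟨P, hP, hdisj⟩ :=
      exists_disjoint_evenAltPaths_of_mem_X hXY hM hMmax huX hi1 hstart
    exact ⟨P, fun j hj _ => hP j hj, fun j k hj hjk _ => hdisj j k hj hjk⟩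
  · rw [← phiAdj_flip, ← evenAltFrom_image_swap, ← phiM_image_swap] at hstart
    obtain ⟨P, hP, hdisj⟩ := exists_disjoint_evenAltPaths_of_mem_X hXY.symm hM.image_swap
      (forall_mWt_le_image_swap hMmax) huY hi1 hstart
    simp only [phiAdj_flip, phiM_image_swap, isAltPath_image_swap] at hP
    exact ⟨P, fun j hj _ => hP j hj, fun j k hj hjk _ => hdisj j k hj hjk⟩

/-- Monotonicity of even alternating paths in the unfolded graph: if there is an
even-length alternating path for `φ(M)` starting at the copy `u^i`, then there
are pairwise node-disjoint even-length alternating paths starting at `u^j` for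
all `i ≤ j ≤ β`, where `β` is the number of copies of `u`. -/
theorem even_alt_path_monotone
    (X Y : Finset V) (hXY : Disjoint X Y) (w : V → V → ℕ)
    (M : Finset (V × V)) (hM : IsBMatching X Y w M)
    (hMmax : ∀ M' : Finset (V × V), IsBMatching X Y w M' → mWt w M' ≤ mWt w M)
    (u : V) (hu : u ∈ X ∪ Y) (i : ℕ) (hi1 : 1 ≤ i) (hiβ : i ≤ alphaCopies X Y w u)
    (hstart : EvenAltFrom (phiAdj X Y w) (phiM w M) (u, i)) :
    ∃ P : ℕ → List (V × ℕ),
      (∀ j, i ≤ j → j ≤ alphaCopies X Y w u →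
        IsAltPath (phiAdj X Y w) (phiM w M) (P j) ∧ (P j).length % 2 = 1 ∧
        ∃ h : P j ≠ [], (P j).head h = (u, j)) ∧
      (∀ j k, i ≤ j → j < k → k ≤ alphaCopies X Y w u →
        List.Disjoint (P j) (P k)) :=
  even_alt_path_monotone_general X Y hXY w M hM hMmax u hu i hi1 hstart
end
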